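/- Let p_0 ≥ 1 be an integer. Then 1 + Σ_{(k,m): k ≥ m ≥ 0, (k,m) ≠ (0,0)} (-1)^{k+m} q^{(k p_0 + m)k + (k-m)(k-m-1)/2} · Q_{k,m}^{(+)}(q)/(q;q)_k = 1 + Σ_{k>0} (-1)^k q^{k^2 p_0 + k(k-1)/2} (1 + q^k), as formal power series in q. -/

import Mathlib

open Finset

/-- The q-Pochhammer symbol `(q;q)_n = ∏_{i=1}^n (1 - q^i)`. -/
def qPoch (q : ℝ) (n : ℕ) : ℝ := ∏ i ∈ range n, (1 - q ^ (i + 1))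

/-- The Gaussian binomial coefficient `[M choose N]_q`. -/
noncomputable def qBinom (q : ℝ) (M N : ℤ) : ℝ :=
  if 0 ≤ N ∧ N ≤ M then qPoch q M.toNat / (qPoch q N.toNat * qPoch q (M - N).toNat) else 0

/-- `Q_{k,m}^{(+)}(q) = [k-1 choose m]_q + q^{2k-m} [k-1 choose m-1]_q`. -/
noncomputable def Qplus (q : ℝ) (k m : ℕ) : ℝ :=
  qBinom q ((k : ℤ) - 1) (m : ℤ) + q ^ (2 * k - m) * qBinom q ((k : ℤ) - 1) ((m : ℤ) - 1)

section basic
variable {q : ℝ} (hq0 : 0 < q) (hq1 : q < 1)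

lemma qPoch_succ (q : ℝ) (n : ℕ) : qPoch q (n + 1) = qPoch q n * (1 - q ^ (n + 1)) :=
  prod_range_succ _ _

include hq0 hq1 in
lemma qPoch_pos (n : ℕ) : 0 < qPoch q n := by
  apply prod_pos
  intro i _
  have : q ^ (i + 1) < 1 := pow_lt_one₀ hq0.le hq1 (Nat.succ_ne_zero i)
  linarith

include hq0 hq1 in
lemma qPoch_le_one (n : ℕ) : qPoch q n ≤ 1 := by
  induction n with
  | zero => simp [qPoch]
  | succ n ih =>
    rw [qPoch_succ]
    have h1 : 0 < q ^ (n + 1) := pow_pos hq0 _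
    have h2 : q ^ (n + 1) < 1 := pow_lt_one₀ hq0.le hq1 (Nat.succ_ne_zero n)
    nlinarith [qPoch_pos hq0 hq1 n]

include hq0 hq1 in
lemma qPoch_ge (n : ℕ) : (1 - q) ^ n ≤ qPoch q n := by
  induction n with
  | zero => simp [qPoch]
  | succ n ih =>
    rw [qPoch_succ, pow_succ]
    have h2 : q ^ (n + 1) ≤ q := by
      calc q ^ (n+1) ≤ q ^ 1 := pow_le_pow_of_le_one hq0.le hq1.le (by omega)
      _ = q := pow_one q
    have h3 : (0:ℝ) ≤ 1 - q := by linarith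
    have h4 : (0:ℝ) < qPoch q n := qPoch_pos hq0 hq1 n
    have : (1 - q) ≤ (1 - q ^ (n+1)) := by linarith
    have h5 : (0:ℝ) ≤ (1-q)^n := pow_nonneg h3 n
    nlinarith

/-- natural-argument version -/
lemma qBinom_nat (q : ℝ) {n m : ℕ} (h : m ≤ n) :
    qBinom q (n : ℤ) (m : ℤ) = qPoch q n / (qPoch q m * qPoch q (n - m)) := by
  rw [qBinom, if_pos ⟨Int.ofNat_nonneg m, by exact_mod_cast h⟩]
  have e1 : ((n:ℤ)).toNat = n := rfl
  have e2 : ((m:ℤ)).toNat = m := rfl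
  have e3 : ((n:ℤ) - (m:ℤ)).toNat = n - m := by omega
  rw [e1, e2, e3]

lemma qBinom_zero_of_lt (q : ℝ) {n m : ℕ} (h : n < m) : qBinom q (n : ℤ) (m : ℤ) = 0 := by
  rw [qBinom, if_neg]
  rintro ⟨-, h2⟩
  exact absurd (by exact_mod_cast h2) (by omega)

include hq0 hq1 in
lemma qBinom_self_zero (n : ℕ) : qBinom q (n : ℤ) 0 = 1 := by
  rw [qBinom, if_pos ⟨le_refl 0, Int.ofNat_nonneg n⟩]
  have : (0:ℤ).toNat = 0 := rfl
  rw [this]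
  have e3 : ((n:ℤ) - 0).toNat = n := by omega
  have e1 : ((n:ℤ)).toNat = n := rfl
  have h0 : qPoch q 0 = 1 := by simp [qPoch]
  rw [e3, e1, h0, one_mul, div_self (qPoch_pos hq0 hq1 n).ne']

end basic

section main
variable {q : ℝ} (hq0 : 0 < q) (hq1 : q < 1)

include hq0 hq1 in
lemma qBinom_nonneg (n m : ℕ) : 0 ≤ qBinom q (n : ℤ) (m : ℤ) := by
  rcases le_or_gt m n with h | h
  · rw [qBinom_nat q h]
    have := qPoch_pos hq0 hq1 n
    have := qPoch_pos hq0 hq1 m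
    have := qPoch_pos hq0 hq1 (n - m)
    positivity
  · rw [qBinom_zero_of_lt q h]

include hq0 hq1 in
lemma qBinom_le (n m : ℕ) : qBinom q (n : ℤ) (m : ℤ) ≤ ((1 - q)⁻¹) ^ n := by
  have h1 : (0:ℝ) < 1 - q := by linarith
  rcases le_or_gt m n with h | h
  · rw [qBinom_nat q h]
    have hd : (1 - q) ^ n ≤ qPoch q m * qPoch q (n - m) := by
      calc (1-q)^n = (1-q)^m * (1-q)^(n-m) := by rw [← pow_add]; congr 1; omega
      _ ≤ qPoch q m * qPoch q (n-m) :=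
          mul_le_mul (qPoch_ge hq0 hq1 m) (qPoch_ge hq0 hq1 (n-m))
            (pow_nonneg h1.le _) (qPoch_pos hq0 hq1 m).le
    have hdp : (0:ℝ) < qPoch q m * qPoch q (n-m) :=
      mul_pos (qPoch_pos hq0 hq1 m) (qPoch_pos hq0 hq1 (n-m))
    have hpn : (0:ℝ) < (1-q)^n := pow_pos h1 n
    rw [inv_pow, ← one_div]
    calc qPoch q n / (qPoch q m * qPoch q (n-m))
        ≤ 1 / (qPoch q m * qPoch q (n-m)) :=
          by gcongr; exact qPoch_le_one hq0 hq1 n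
      _ ≤ 1 / (1-q)^n := one_div_le_one_div_of_le hpn hd
  · rw [qBinom_zero_of_lt q h]
    positivity

end main

section pascal
variable {q : ℝ} (hq0 : 0 < q) (hq1 : q < 1)

include hq0 hq1 in
lemma qBinom_pascal {n m : ℕ} (h : m ≤ n) :
    qBinom q ((n:ℤ) + 1) ((m:ℤ) + 1) =
      qBinom q (n:ℤ) ((m:ℤ) + 1) + q ^ (n - m) * qBinom q (n:ℤ) (m:ℤ) := by
  have hc1 : ((n:ℤ) + 1) = ((n+1 : ℕ) : ℤ) := by push_cast; ring
  have hc2 : ((m:ℤ) + 1) = ((m+1 : ℕ) : ℤ) := by push_cast; ring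
  rw [hc1, hc2]
  rcases eq_or_lt_of_le h with rfl | hlt
  · rw [qBinom_zero_of_lt q (by omega : m < m + 1), zero_add]
    rw [qBinom_nat q (le_refl (m+1)), qBinom_nat q (le_refl m)]
    have e1 : m + 1 - (m + 1) = 0 := by omega
    have e2 : m - m = 0 := by omega
    rw [e1, e2]
    have h0 : qPoch q 0 = 1 := by simp [qPoch]
    rw [h0, mul_one, mul_one, pow_zero, one_mul,
      div_self (qPoch_pos hq0 hq1 (m+1)).ne', div_self (qPoch_pos hq0 hq1 m).ne']
  · have h1 : m + 1 ≤ n := hlt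
    rw [qBinom_nat q (by omega : m + 1 ≤ n + 1), qBinom_nat q h1, qBinom_nat q h]
    have e1 : n + 1 - (m + 1) = n - m := by omega
    rw [e1]
    have e2 : qPoch q (n+1) = qPoch q n * (1 - q^(n+1)) := qPoch_succ q n
    have e3 : qPoch q (m+1) = qPoch q m * (1 - q^(m+1)) := qPoch_succ q m
    obtain ⟨d, hd⟩ : ∃ d, n - m = d + 1 := ⟨n - m - 1, by omega⟩
    have e4 : qPoch q (n - m) = qPoch q (n - m - 1) * (1 - q^(n-m)) := by
      rw [hd, qPoch_succ q d]
      simp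
    have e5 : n - (m+1) = n - m - 1 := by omega
    rw [e5, e2, e3, e4]
    have p1 := (qPoch_pos hq0 hq1 m).ne'
    have p2 := (qPoch_pos hq0 hq1 (n-m-1)).ne'
    have p3 := (qPoch_pos hq0 hq1 n).ne'
    have q1 : (1 - q^(m+1)) ≠ 0 := by
      have : q ^ (m+1) < 1 := pow_lt_one₀ hq0.le hq1 (Nat.succ_ne_zero m); linarith
    have q2 : (1 - q^(n-m)) ≠ 0 := by
      have : q ^ (n-m) < 1 := pow_lt_one₀ hq0.le hq1 (by omega); linarith
    have key : (1 - q^(n+1)) = (1 - q^(n-m)) + q^(n-m) * (1 - q^(m+1)) := by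
      have : q^(n-m) * q^(m+1) = q^(n+1) := by rw [← pow_add]; congr 1; omega
      rw [mul_sub, this]; ring
    rw [key]
    field_simp
end pascal

lemma tri (n : ℕ) : (n+1)*n/2 = n*(n-1)/2 + n := by
  have h : (n+1)*n = n*(n-1) + 2*n := by
    cases n with
    | zero => rfl
    | succ m => simp only [Nat.succ_sub_one]; ring
  rw [h, Nat.add_mul_div_left _ _ (by norm_num : 0 < 2)]

section qbt
variable {q : ℝ} (hq0 : 0 < q) (hq1 : q < 1)

include hq0 hq1 in
lemma qbinom_alt_sum (n : ℕ) :
    ∑ m ∈ range (n+1), (-1:ℝ)^m * q^(m*(m-1)/2 + m) * qBinom q (n:ℤ) (m:ℤ) = qPoch q n := by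
  induction n with
  | zero =>
    rw [sum_range_one]
    norm_num
    have := qBinom_self_zero hq0 hq1 0
    norm_num at this
    rw [this]
    simp [qPoch]
  | succ n ih =>
    rw [Finset.sum_range_succ' _ (n+1)]
    have hf0 : (-1:ℝ)^0 * q^(0*(0-1)/2 + 0) * qBinom q ((n+1:ℕ):ℤ) ((0:ℕ):ℤ) = 1 := by
      norm_num
      have := qBinom_self_zero hq0 hq1 (n+1)
      norm_num at this ⊢
      exact this
    rw [hf0]
    have hsplit : ∀ i ∈ range (n+1),
        (-1:ℝ)^(i+1) * q^((i+1)*((i+1)-1)/2 + (i+1)) * qBinom q ((n+1:ℕ):ℤ) ((i+1:ℕ):ℤ)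
        = (-1:ℝ)^(i+1) * q^((i+1)*i/2 + (i+1)) * qBinom q (n:ℤ) ((i+1:ℕ):ℤ)
          + (-(q^(n+1))) * ((-1:ℝ)^i * q^(i*(i-1)/2 + i) * qBinom q (n:ℤ) (i:ℤ)) := by
      intro i hi
      have hile : i ≤ n := by simpa using Nat.lt_succ_iff.mp (mem_range.mp hi)
      have hc1 : ((n+1:ℕ):ℤ) = (n:ℤ) + 1 := by push_cast; ring
      have hc2 : ((i+1:ℕ):ℤ) = (i:ℤ) + 1 := by push_cast; ring
      rw [hc1, hc2, qBinom_pascal hq0 hq1 hile, ← hc2]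
      have hE : (i+1)*((i+1)-1)/2 = (i+1)*i/2 := by norm_num
      rw [hE]
      have hexp : (i+1)*i/2 + (i+1) + (n - i) = (i*(i-1)/2 + i) + (n+1) := by
        have ht := tri i
        generalize i*(i-1)/2 = a at ht ⊢
        generalize (i+1)*i/2 = b at ht ⊢
        omega
      have key2 : q^((i+1)*i/2 + (i+1)) * q^(n-i) = q^(i*(i-1)/2 + i) * q^(n+1) := by
        rw [← pow_add, ← pow_add, hexp]
      rw [mul_add]
      congr 1
      calc (-1:ℝ)^(i+1) * q^((i+1)*i/2 + (i+1)) * (q^(n-i) * qBinom q (n:ℤ) (i:ℤ))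
          = (-1:ℝ)^(i+1) * (q^((i+1)*i/2 + (i+1)) * q^(n-i)) * qBinom q (n:ℤ) (i:ℤ) := by
            ring
        _ = (-1:ℝ)^(i+1) * (q^(i*(i-1)/2 + i) * q^(n+1)) * qBinom q (n:ℤ) (i:ℤ) := by
            rw [key2]
        _ = (-(q^(n+1))) * ((-1:ℝ)^i * q^(i*(i-1)/2 + i) * qBinom q (n:ℤ) (i:ℤ)) := by
            rw [pow_succ]; ring
    rw [Finset.sum_congr rfl hsplit, Finset.sum_add_distrib, ← Finset.mul_sum, ih]
    have hlast : ∑ i ∈ range (n+1),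
        (-1:ℝ)^(i+1) * q^((i+1)*i/2 + (i+1)) * qBinom q (n:ℤ) ((i+1:ℕ):ℤ) + 1
        = qPoch q n := by
      have h2 : (-1:ℝ)^0 * q^(0*(0-1)/2+0) * qBinom q (n:ℤ) ((0:ℕ):ℤ) = 1 := by
        norm_num
        have := qBinom_self_zero hq0 hq1 n
        norm_num at this ⊢
        exact this
      have congr2 : ∀ i ∈ range (n+1),
          (-1:ℝ)^(i+1) * q^((i+1)*i/2 + (i+1)) * qBinom q (n:ℤ) ((i+1:ℕ):ℤ)
          = (-1:ℝ)^(i+1) * q^((i+1)*((i+1)-1)/2 + (i+1)) * qBinom q (n:ℤ) ((i+1:ℕ):ℤ) := by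
        intro i _; norm_num
      have hss := Finset.sum_range_succ' (fun m =>
        (-1:ℝ)^m * q^(m*(m-1)/2 + m) * qBinom q (n:ℤ) (m:ℤ)) (n+1)
      rw [h2] at hss
      rw [Finset.sum_congr rfl congr2, ← hss, Finset.sum_range_succ,
        qBinom_zero_of_lt q (Nat.lt_succ_self n), mul_zero, add_zero, ih]

    rw [add_right_comm, hlast, qPoch_succ]
    ring
end qbt

lemma qBinom_of_neg (q : ℝ) {M N : ℤ} (h : N < 0) : qBinom q M N = 0 := by
  rw [qBinom, if_neg]; rintro ⟨h1, -⟩; omega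

lemma expA (m d : ℕ) :
    m*(m+d) + d*(d-1)/2 = (m+d)*((m+d)-1)/2 + (m*(m-1)/2 + m) := by
  induction m with
  | zero => simp
  | succ m ih =>
    have h1 : (m+1)*(m+1+d) = m*(m+d) + (2*m+d+1) := by ring
    have h2 := tri (m+d)
    have h3 := tri m
    have e1 : m+1+d = (m+d)+1 := by omega
    have e2 : (m+1+d)-1 = m+d := by omega
    have e3 : (m+1)-1 = m := by omega
    rw [h1, e2, e3, e1, h2, h3]
    generalize m*(m+d) = x at ih ⊢
    generalize d*(d-1)/2 = t at ih ⊢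
    generalize (m+d)*((m+d)-1)/2 = y at ih ⊢
    generalize m*(m-1)/2 = z at ih ⊢
    omega

lemma expA' {m k : ℕ} (h : m ≤ k) :
    m*k + (k-m)*((k-m)-1)/2 = k*(k-1)/2 + (m*(m-1)/2 + m) := by
  obtain ⟨d, rfl⟩ : ∃ d, k = m + d := ⟨k - m, by omega⟩
  have e : m + d - m = d := by omega
  rw [e]
  exact expA m d

lemma expB {i k : ℕ} (h : i + 1 ≤ k) :
    (i+1)*k + (k-(i+1))*((k-(i+1))-1)/2 + (2*k - (i+1))
      = k*(k-1)/2 + 2*k + (i*(i-1)/2 + i) := by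
  have hA := expA' h
  simp only [Nat.add_sub_cancel] at hA
  have ht := tri i
  generalize (k-(i+1))*((k-(i+1))-1)/2 = x at hA ⊢
  generalize k*(k-1)/2 = y at hA ⊢
  generalize (i+1)*i/2 = b at hA ht ⊢
  generalize i*(i-1)/2 = z at ht ⊢
  generalize hv : (i+1)*k = v at hA ⊢
  omega

section keysum
variable {q : ℝ} (hq0 : 0 < q) (hq1 : q < 1)

include hq0 hq1 in
lemma key_sum {k : ℕ} (hk : 1 ≤ k) :
    ∑ m ∈ range (k+1), (-1:ℝ)^m * q^(m*k + (k-m)*((k-m)-1)/2) * Qplus q k m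
      = q^(k*(k-1)/2) * (1 + q^k) * qPoch q k := by
  obtain ⟨n, rfl⟩ : ∃ n, k = n + 1 := ⟨k - 1, by omega⟩
  set k := n + 1 with hkdef
  have hQ : ∀ m : ℕ, Qplus q k m
      = qBinom q (n:ℤ) (m:ℤ) + q^(2*k-m) * qBinom q (n:ℤ) ((m:ℤ)-1) := by
    intro m
    have : ((k:ℕ):ℤ) - 1 = (n:ℤ) := by push_cast [hkdef]; ring
    rw [Qplus, this]
  have hsplit : ∀ m ∈ range (k+1),
      (-1:ℝ)^m * q^(m*k + (k-m)*((k-m)-1)/2) * Qplus q k m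
      = (-1:ℝ)^m * q^(m*k + (k-m)*((k-m)-1)/2) * qBinom q (n:ℤ) (m:ℤ)
        + (-1:ℝ)^m * q^(m*k + (k-m)*((k-m)-1)/2) * (q^(2*k-m) * qBinom q (n:ℤ) ((m:ℤ)-1)) := by
    intro m _
    rw [hQ m]; ring
  rw [Finset.sum_congr rfl hsplit, Finset.sum_add_distrib]
  -- first sum
  have hS1 : ∑ m ∈ range (k+1),
      (-1:ℝ)^m * q^(m*k + (k-m)*((k-m)-1)/2) * qBinom q (n:ℤ) (m:ℤ)
      = q^(k*(k-1)/2) * qPoch q n := by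
    rw [Finset.sum_range_succ, qBinom_zero_of_lt q (by omega : n < k), mul_zero, add_zero]
    have hc : ∀ m ∈ range k,
        (-1:ℝ)^m * q^(m*k + (k-m)*((k-m)-1)/2) * qBinom q (n:ℤ) (m:ℤ)
        = q^(k*(k-1)/2) * ((-1:ℝ)^m * q^(m*(m-1)/2 + m) * qBinom q (n:ℤ) (m:ℤ)) := by
      intro m hm
      have hml : m ≤ k := (mem_range.mp hm).le
      rw [expA' hml, pow_add]
      ring
    rw [Finset.sum_congr rfl hc, ← Finset.mul_sum]
    have : k = n + 1 := hkdef
    rw [this, qbinom_alt_sum hq0 hq1 n]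
  -- second sum
  have hS2 : ∑ m ∈ range (k+1),
      (-1:ℝ)^m * q^(m*k + (k-m)*((k-m)-1)/2) * (q^(2*k-m) * qBinom q (n:ℤ) ((m:ℤ)-1))
      = -(q^(k*(k-1)/2 + 2*k) * qPoch q n) := by
    rw [Finset.sum_range_succ' _ k]
    have h0 : (-1:ℝ)^0 * q^(0*k + (k-0)*((k-0)-1)/2) * (q^(2*k-0) * qBinom q (n:ℤ) (((0:ℕ):ℤ)-1)) = 0 := by
      rw [qBinom_of_neg q (by norm_num : ((0:ℕ):ℤ) - 1 < 0)]
      ring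
    rw [h0, add_zero]
    have hc : ∀ i ∈ range k,
        (-1:ℝ)^(i+1) * q^((i+1)*k + (k-(i+1))*((k-(i+1))-1)/2)
          * (q^(2*k-(i+1)) * qBinom q (n:ℤ) (((i+1:ℕ):ℤ)-1))
        = -(q^(k*(k-1)/2 + 2*k)) * ((-1:ℝ)^i * q^(i*(i-1)/2 + i) * qBinom q (n:ℤ) (i:ℤ)) := by
      intro i hi
      have hik : i + 1 ≤ k := mem_range.mp hi
      have hcast : ((i+1:ℕ):ℤ) - 1 = (i:ℤ) := by push_cast; ring
      rw [hcast]
      have hE := expB hik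
      calc (-1:ℝ)^(i+1) * q^((i+1)*k + (k-(i+1))*((k-(i+1))-1)/2)
            * (q^(2*k-(i+1)) * qBinom q (n:ℤ) (i:ℤ))
          = (-1:ℝ)^(i+1)
            * q^((i+1)*k + (k-(i+1))*((k-(i+1))-1)/2 + (2*k-(i+1)))
            * qBinom q (n:ℤ) (i:ℤ) := by rw [pow_add]; ring
        _ = (-1:ℝ)^(i+1) * q^(k*(k-1)/2 + 2*k + (i*(i-1)/2 + i)) * qBinom q (n:ℤ) (i:ℤ) := by
            rw [hE]
        _ = -(q^(k*(k-1)/2 + 2*k)) * ((-1:ℝ)^i * q^(i*(i-1)/2 + i) * qBinom q (n:ℤ) (i:ℤ)) := by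
            rw [pow_add q (k*(k-1)/2 + 2*k), pow_succ]
            ring
    rw [Finset.sum_congr rfl hc, ← Finset.mul_sum]
    have : k = n + 1 := hkdef
    rw [this, qbinom_alt_sum hq0 hq1 n]
    ring
  rw [hS1, hS2]
  have hpk : qPoch q k = qPoch q n * (1 - q^k) := qPoch_succ q n
  rw [hpk, pow_add]
  have h2k : q^(2*k) = q^k * q^k := by rw [two_mul, pow_add]
  rw [h2k]
  ring
end keysum

section assembly
variable {q : ℝ} (hq0 : 0 < q) (hq1 : q < 1)

lemma Qplus_zero_of_gt {k m : ℕ} (h : k < m) : Qplus q k m = 0 := by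
  rw [Qplus, qBinom, if_neg (by rintro ⟨-, h2⟩; omega), qBinom,
    if_neg (by rintro ⟨-, h2⟩; omega)]
  ring

lemma Qplus_zero_zero : Qplus q 0 0 = 0 := by
  rw [Qplus, qBinom, if_neg (by rintro ⟨-, h2⟩; omega), qBinom,
    if_neg (by rintro ⟨h1, -⟩; omega)]
  ring

include hq0 hq1 in
lemma Qplus_nonneg (k m : ℕ) : 0 ≤ Qplus q k m := by
  rcases lt_or_ge k m with h | h
  · rw [Qplus_zero_of_gt h]
  rcases Nat.eq_zero_or_pos k with rfl | hk
  · interval_cases m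
    rw [Qplus_zero_zero]
  obtain ⟨n, rfl⟩ : ∃ n, k = n + 1 := ⟨k - 1, by omega⟩
  have hc : ((n+1:ℕ):ℤ) - 1 = (n:ℤ) := by push_cast; ring
  rw [Qplus, hc]
  rcases Nat.eq_zero_or_pos m with rfl | hm
  · rw [qBinom_of_neg q (by norm_num : ((0:ℕ):ℤ) - 1 < 0)]
    have := qBinom_nonneg hq0 hq1 n 0
    simpa using this
  · obtain ⟨j, rfl⟩ : ∃ j, m = j + 1 := ⟨m - 1, by omega⟩
    have hc2 : ((j+1:ℕ):ℤ) - 1 = (j:ℤ) := by push_cast; ring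
    rw [hc2]
    have h1 := qBinom_nonneg hq0 hq1 n (j+1)
    have h2 := qBinom_nonneg hq0 hq1 n j
    positivity

include hq0 hq1 in
lemma Qplus_le (k m : ℕ) : Qplus q k m ≤ 2 * ((1-q)⁻¹)^k := by
  have h1q : (0:ℝ) < 1 - q := by linarith
  have hc1 : (1:ℝ) ≤ (1-q)⁻¹ := by
    rw [le_inv_comm₀] <;> linarith
  have hck : (0:ℝ) < ((1-q)⁻¹)^k := by positivity
  rcases lt_or_ge k m with h | h
  · rw [Qplus_zero_of_gt h]; positivity
  rcases Nat.eq_zero_or_pos k with rfl | hk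
  · interval_cases m
    rw [Qplus_zero_zero]; positivity
  obtain ⟨n, rfl⟩ : ∃ n, k = n + 1 := ⟨k - 1, by omega⟩
  have hc : ((n+1:ℕ):ℤ) - 1 = (n:ℤ) := by push_cast; ring
  rw [Qplus, hc]
  have hbn : ((1-q)⁻¹)^n ≤ ((1-q)⁻¹)^(n+1) :=
    pow_le_pow_right₀ hc1 (by omega)
  have hq2 : q ^ (2*(n+1) - m) ≤ 1 :=
    pow_le_one₀ hq0.le hq1.le
  rcases Nat.eq_zero_or_pos m with rfl | hm
  · rw [qBinom_of_neg q (by norm_num : ((0:ℕ):ℤ) - 1 < 0), mul_zero, add_zero]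
    have := (qBinom_le hq0 hq1 n 0).trans hbn
    nlinarith
  · obtain ⟨j, rfl⟩ : ∃ j, m = j + 1 := ⟨m - 1, by omega⟩
    have hc2 : ((j+1:ℕ):ℤ) - 1 = (j:ℤ) := by push_cast; ring
    rw [hc2]
    have h1 := (qBinom_le hq0 hq1 n (j+1)).trans hbn
    have h2 := (qBinom_le hq0 hq1 n j).trans hbn
    have h2' := qBinom_nonneg hq0 hq1 n j
    have hqp : (0:ℝ) ≤ q ^ (2*(n+1) - (j+1)) := by positivity
    nlinarith

end assembly

noncomputable def fAux (q : ℝ) (p₀ : ℕ) (p : ℕ × ℕ) : ℝ :=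
  (-1 : ℝ) ^ (p.1 + p.2) * q ^ ((p.1 * p₀ + p.2) * p.1 + (p.1 - p.2) * (p.1 - p.2 - 1) / 2) *
    Qplus q p.1 p.2 / qPoch q p.1

noncomputable def gAux (q : ℝ) (p₀ : ℕ) (k : ℕ) : ℝ :=
  if k = 0 then 0 else (-1 : ℝ) ^ k * q ^ (k ^ 2 * p₀ + k * (k - 1) / 2) * (1 + q ^ k)

lemma fAux_zero_of_gt (q : ℝ) (p₀ : ℕ) {k m : ℕ} (h : k < m) : fAux q p₀ (k, m) = 0 := by
  rw [fAux]; simp only; rw [Qplus_zero_of_gt h]; ring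

lemma fAux_zero_zero (q : ℝ) (p₀ : ℕ) : fAux q p₀ (0, 0) = 0 := by
  rw [fAux]; simp only; rw [Qplus_zero_zero]; ring

section final
variable {q : ℝ} (hq0 : 0 < q) (hq1 : q < 1)

include hq0 hq1 in
lemma fAux_abs_le {p₀ : ℕ} (hp : 1 ≤ p₀) {k : ℕ} (hk : 1 ≤ k) (m : ℕ) :
    |fAux q p₀ (k, m)| ≤ 2 * q ^ (k*k + m) * ((1-q)⁻¹) ^ (2*k) := by
  have h1q : (0:ℝ) < 1 - q := by linarith
  have hPpos := qPoch_pos hq0 hq1 k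
  have hQnn := Qplus_nonneg hq0 hq1 k m
  set E := (k * p₀ + m) * k + (k - m) * (k - m - 1) / 2 with hE
  have habs : |fAux q p₀ (k, m)| = q ^ E * Qplus q k m * (qPoch q k)⁻¹ := by
    rw [fAux]
    simp only
    rw [div_eq_mul_inv, abs_mul, abs_mul, abs_mul, abs_pow, abs_neg, abs_one, one_pow,
      one_mul, abs_of_nonneg (pow_nonneg hq0.le _), abs_of_nonneg hQnn,
      abs_of_nonneg (inv_nonneg.mpr hPpos.le)]
  rw [habs]
  have hA : q ^ E ≤ q ^ (k*k + m) := by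
    apply pow_le_pow_of_le_one hq0.le hq1.le
    have h1 : k ≤ k * p₀ := Nat.le_mul_of_pos_right k (by omega)
    have h2 : m ≤ m * k := Nat.le_mul_of_pos_right m (by omega)
    have h3 : (k + m) * k ≤ (k * p₀ + m) * k := Nat.mul_le_mul_right k (by omega)
    have h4 : (k + m) * k = k * k + m * k := by ring
    omega
  have hB : Qplus q k m ≤ 2 * ((1-q)⁻¹)^k := Qplus_le hq0 hq1 k m
  have hC : (qPoch q k)⁻¹ ≤ ((1-q)⁻¹)^k := by
    have := inv_anti₀ (pow_pos h1q k) (qPoch_ge hq0 hq1 k)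
    rwa [← inv_pow] at this
  calc q ^ E * Qplus q k m * (qPoch q k)⁻¹
      ≤ q ^ (k*k+m) * (2 * ((1-q)⁻¹)^k) * ((1-q)⁻¹)^k := by
        apply mul_le_mul _ hC (inv_nonneg.mpr hPpos.le) (by positivity)
        exact mul_le_mul hA hB hQnn (pow_nonneg hq0.le _)
    _ = 2 * q ^ (k*k + m) * ((1-q)⁻¹) ^ (2*k) := by
        rw [two_mul, pow_add]; ring

end final

section final2
variable {q : ℝ} (hq0 : 0 < q) (hq1 : q < 1)

lemma fAux_slice_zero (q : ℝ) (p₀ k : ℕ) : ∀ m ∉ range (k+1), fAux q p₀ (k, m) = 0 := by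
  intro m hm
  exact fAux_zero_of_gt q p₀ (by simpa using hm)

lemma slice_summable (q : ℝ) (p₀ k : ℕ) : Summable (fun m => fAux q p₀ (k, m)) :=
  summable_of_ne_finset_zero (fAux_slice_zero q p₀ k)

lemma slice_abs_summable (q : ℝ) (p₀ k : ℕ) : Summable (fun m => |fAux q p₀ (k, m)|) :=
  summable_of_ne_finset_zero (s := range (k+1)) (fun m hm => by
    simp only [fAux_slice_zero q p₀ k m hm, abs_zero])

include hq0 hq1 in
lemma slice_abs_tsum_le {p₀ : ℕ} (hp : 1 ≤ p₀) (k : ℕ) :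
    ∑' m, |fAux q p₀ (k, m)| ≤ 2 * q^(k*k) * ((1-q)⁻¹)^(2*k) * (1-q)⁻¹ := by
  have h1q : (0:ℝ) < 1 - q := by linarith
  rcases Nat.eq_zero_or_pos k with rfl | hk
  · have hz : ∀ m : ℕ, |fAux q p₀ (0, m)| = 0 := by
      intro m
      rcases Nat.eq_zero_or_pos m with rfl | hm
      · rw [fAux_zero_zero, abs_zero]
      · rw [fAux_zero_of_gt q p₀ hm, abs_zero]
    rw [tsum_congr hz, tsum_zero]
    positivity
  · rw [tsum_eq_sum (f := fun m => |fAux q p₀ (k, m)|)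
      (fun m hm => by simp only [fAux_slice_zero q p₀ k m hm, abs_zero])]
    calc ∑ m ∈ range (k+1), |fAux q p₀ (k, m)|
        ≤ ∑ m ∈ range (k+1), 2 * q^(k*k + m) * ((1-q)⁻¹)^(2*k) :=
          Finset.sum_le_sum (fun m _ => fAux_abs_le hq0 hq1 hp hk m)
      _ = 2 * q^(k*k) * ((1-q)⁻¹)^(2*k) * ∑ m ∈ range (k+1), q^m := by
          rw [Finset.mul_sum]
          apply Finset.sum_congr rfl
          intro m _
          rw [pow_add]; ring
      _ ≤ 2 * q^(k*k) * ((1-q)⁻¹)^(2*k) * (1-q)⁻¹ := by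
          have hgeo : ∑ m ∈ range (k+1), q^m ≤ (1-q)⁻¹ := by
            have h1 := Summable.sum_le_tsum (range (k+1)) (fun m _ => pow_nonneg hq0.le m)
              (summable_geometric_of_lt_one hq0.le hq1)
            rwa [tsum_geometric_of_lt_one hq0.le hq1] at h1
          have : (0:ℝ) ≤ 2 * q^(k*k) * ((1-q)⁻¹)^(2*k) := by positivity
          exact mul_le_mul_of_nonneg_left hgeo this

include hq0 hq1 in
lemma gBound_summable : Summable (fun k : ℕ => 2 * q^(k*k) * ((1-q)⁻¹)^(2*k) * (1-q)⁻¹) := by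
  have h1q : (0:ℝ) < 1 - q := by linarith
  obtain ⟨N, hN⟩ := exists_pow_lt_of_lt_one (show (0:ℝ) < (1-q)^2/2 by positivity) hq1
  have hρ0 : (0:ℝ) ≤ q^N * ((1-q)⁻¹)^2 := by positivity
  have hρ1 : q^N * ((1-q)⁻¹)^2 < 1 := by
    have h2 : q^N * ((1-q)⁻¹)^2 < ((1-q)^2/2) * ((1-q)⁻¹)^2 :=
      mul_lt_mul_of_pos_right hN (by positivity)
    have h3 : ((1-q)^2/2) * ((1-q)⁻¹)^2 = 1/2 := by
      field_simp
    linarith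
  have hgeom : Summable (fun k : ℕ => (2 * (1-q)⁻¹ / q^(N*N)) * (q^N * ((1-q)⁻¹)^2)^k) :=
    Summable.mul_left _ (summable_geometric_of_lt_one hρ0 hρ1)
  apply Summable.of_nonneg_of_le (fun k => by positivity) _ hgeom
  intro k
  have hkey : q^(k*k) * q^(N*N) ≤ q^(N*k) := by
    rw [← pow_add]
    apply pow_le_pow_of_le_one hq0.le hq1.le
    rcases le_total N k with h | h
    · have : N*k ≤ k*k := Nat.mul_le_mul_right k h
      omega
    · have : N*k ≤ N*N := Nat.mul_le_mul_left N h
      omega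
  have hNN : (0:ℝ) < q^(N*N) := pow_pos hq0 _
  rw [div_mul_eq_mul_div, le_div_iff₀ hNN]
  calc 2 * q^(k*k) * ((1-q)⁻¹)^(2*k) * (1-q)⁻¹ * q^(N*N)
      = (q^(k*k) * q^(N*N)) * (2 * ((1-q)⁻¹)^(2*k) * (1-q)⁻¹) := by ring
    _ ≤ q^(N*k) * (2 * ((1-q)⁻¹)^(2*k) * (1-q)⁻¹) :=
        mul_le_mul_of_nonneg_right hkey (by positivity)
    _ = 2 * (1-q)⁻¹ * (q^N * ((1-q)⁻¹)^2)^k := by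
        rw [mul_pow, ← pow_mul, ← pow_mul]
        ring

include hq0 hq1 in
lemma fAux_summable {p₀ : ℕ} (hp : 1 ≤ p₀) : Summable (fAux q p₀) := by
  rw [← summable_abs_iff]
  rw [summable_prod_of_nonneg (fun p => abs_nonneg _)]
  constructor
  · intro k
    exact slice_abs_summable q p₀ k
  · apply Summable.of_nonneg_of_le (fun k => tsum_nonneg (fun m => abs_nonneg _))
      (fun k => slice_abs_tsum_le hq0 hq1 hp k)
    exact gBound_summable hq0 hq1

end final2

section main2
variable {q : ℝ} (hq0 : 0 < q) (hq1 : q < 1)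

include hq0 hq1 in
lemma inner_eq {p₀ : ℕ} (hp : 1 ≤ p₀) (k : ℕ) :
    ∑' m, fAux q p₀ (k, m) = gAux q p₀ k := by
  rw [tsum_eq_sum (fAux_slice_zero q p₀ k)]
  rcases Nat.eq_zero_or_pos k with rfl | hk
  · rw [sum_range_one, fAux_zero_zero, gAux, if_pos rfl]
  · have hk0 : k ≠ 0 := by omega
    rw [gAux, if_neg hk0]
    have hterm : ∀ m ∈ range (k+1), fAux q p₀ (k, m)
        = ((-1:ℝ)^k * q^(k^2*p₀) * (qPoch q k)⁻¹)
          * ((-1:ℝ)^m * q^(m*k + (k-m)*(k-m-1)/2) * Qplus q k m) := by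
      intro m _
      rw [fAux]
      simp only
      have h1 : (k*p₀+m)*k = k^2*p₀ + m*k := by ring
      rw [h1, add_assoc, pow_add q, pow_add (-1:ℝ) k m]
      ring
    rw [Finset.sum_congr rfl hterm, ← Finset.mul_sum, key_sum hq0 hq1 hk, pow_add]
    field_simp [(qPoch_pos hq0 hq1 k).ne']
end main2


/-- For integer `p₀ ≥ 1`:
`1 + Σ_{k≥m≥0, (k,m)≠(0,0)} (-1)^{k+m} q^{(kp₀+m)k + (k-m)(k-m-1)/2} Q_{k,m}^{(+)}(q)/(q;q)_k`
` = 1 + Σ_{k>0} (-1)^k q^{k²p₀+k(k-1)/2}(1+q^k)`, here stated for all real `0 < q < 1`. -/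
theorem double_sum_reduction (p₀ : ℕ) (hp : 1 ≤ p₀) (q : ℝ) (hq0 : 0 < q) (hq1 : q < 1) :
    1 + ∑' p : {p : ℕ × ℕ // p.2 ≤ p.1 ∧ p ≠ (0, 0)},
        (-1 : ℝ) ^ ((p : ℕ × ℕ).1 + (p : ℕ × ℕ).2) *
          q ^ (((p : ℕ × ℕ).1 * p₀ + (p : ℕ × ℕ).2) * (p : ℕ × ℕ).1 +
            ((p : ℕ × ℕ).1 - (p : ℕ × ℕ).2) * ((p : ℕ × ℕ).1 - (p : ℕ × ℕ).2 - 1) / 2) *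
          Qplus q (p : ℕ × ℕ).1 (p : ℕ × ℕ).2 / qPoch q (p : ℕ × ℕ).1 =
      1 + ∑' k : {k : ℕ // 0 < k},
        (-1 : ℝ) ^ (k : ℕ) * q ^ ((k : ℕ) ^ 2 * p₀ + (k : ℕ) * ((k : ℕ) - 1) / 2) *
          (1 + q ^ (k : ℕ)) := by
  congr 1
  have hsupp : Function.support (fAux q p₀) ⊆ {p : ℕ × ℕ | p.2 ≤ p.1 ∧ p ≠ (0, 0)} := by
    intro p hp'
    by_contra hcon
    apply hp'
    obtain ⟨k, m⟩ := p
    rcases not_and_or.mp hcon with h | h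
    · exact fAux_zero_of_gt q p₀ (by omega)
    · push_neg at h
      obtain ⟨rfl, rfl⟩ : k = 0 ∧ m = 0 := by
        have := Prod.mk.injEq k m 0 0 ▸ h
        constructor <;> [exact (Prod.mk.inj h).1; exact (Prod.mk.inj h).2]
      exact fAux_zero_zero q p₀
  calc ∑' p : {p : ℕ × ℕ // p.2 ≤ p.1 ∧ p ≠ (0, 0)},
        (-1 : ℝ) ^ ((p : ℕ × ℕ).1 + (p : ℕ × ℕ).2) *
          q ^ (((p : ℕ × ℕ).1 * p₀ + (p : ℕ × ℕ).2) * (p : ℕ × ℕ).1 +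
            ((p : ℕ × ℕ).1 - (p : ℕ × ℕ).2) * ((p : ℕ × ℕ).1 - (p : ℕ × ℕ).2 - 1) / 2) *
          Qplus q (p : ℕ × ℕ).1 (p : ℕ × ℕ).2 / qPoch q (p : ℕ × ℕ).1
      = ∑' p : {p : ℕ × ℕ // p.2 ≤ p.1 ∧ p ≠ (0, 0)}, fAux q p₀ ↑p :=
        tsum_congr (fun p => rfl)
    _ = ∑' p : ℕ × ℕ, fAux q p₀ p := tsum_subtype_eq_of_support_subset hsupp
    _ = ∑' k, ∑' m, fAux q p₀ (k, m) :=
        Summable.tsum_prod' (fAux_summable hq0 hq1 hp) (fun k => slice_summable q p₀ k)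
    _ = ∑' k, gAux q p₀ k := tsum_congr (fun k => inner_eq hq0 hq1 hp k)
    _ = ∑' k : {k : ℕ // 0 < k}, gAux q p₀ ↑k := by
        refine (tsum_subtype_eq_of_support_subset ?_).symm
        intro k hk
        rcases Nat.eq_zero_or_pos k with rfl | h
        · exact absurd (by rw [gAux, if_pos rfl] : gAux q p₀ 0 = 0) hk
        · exact h
    _ = ∑' k : {k : ℕ // 0 < k},
        (-1 : ℝ) ^ (k : ℕ) * q ^ ((k : ℕ) ^ 2 * p₀ + (k : ℕ) * ((k : ℕ) - 1) / 2) *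
          (1 + q ^ (k : ℕ)) := by
        apply tsum_congr
        intro k
        rw [gAux, if_neg (Nat.pos_iff_ne_zero.mp k.2)]
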